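/- arXiv:2501.06373 — 2 statements merged into one kernel-verified Lean document; each statement's English description precedes it below -/
import Mathlib

section
/- Let (u, φ, ψ, w) be a classical solution of the suspension-bridge Shear beam system in thermoelasticity of type III. Then the energy E is nonincreasing: for all 0 ≤ s ≤ t one has E(t) ≤ E(s); in particular E(t) ≤ E(0) for all t ≥ 0. -/
open MeasureTheory Set

noncomputable section

/-- Partial derivative with respect to the time variable (second argument). -/
def pdt (f : ℝ → ℝ → ℝ) (x t : ℝ) : ℝ := deriv (fun s => f x s) t

/-- Partial derivative with respect to the space variable (first argument). -/
def pdx (f : ℝ → ℝ → ℝ) (x t : ℝ) : ℝ := deriv (fun y => f y t) x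

/-- A classical solution of the suspension-bridge Shear beam system in
thermoelasticity of type III. -/
structure IsShearSolution (L ρ α lm μ ρ₁ K γ b ρ₃ δ κ β : ℝ)
    (u φ ψ w : ℝ → ℝ → ℝ) : Prop where
  smooth_u : ContDiff ℝ 3 (fun p : ℝ × ℝ => u p.1 p.2)
  smooth_phi : ContDiff ℝ 3 (fun p : ℝ × ℝ => φ p.1 p.2)
  smooth_psi : ContDiff ℝ 3 (fun p : ℝ × ℝ => ψ p.1 p.2)
  smooth_w : ContDiff ℝ 3 (fun p : ℝ × ℝ => w p.1 p.2)
  eq1 : ∀ x ∈ Ioo (0:ℝ) L, ∀ t : ℝ, 0 < t →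
    ρ * pdt (pdt u) x t - α * pdx (pdx u) x t - lm * (φ x t - u x t)
      + μ * pdt u x t = 0
  eq2 : ∀ x ∈ Ioo (0:ℝ) L, ∀ t : ℝ, 0 < t →
    ρ₁ * pdt (pdt φ) x t - K * pdx (fun y s => pdx φ y s + ψ y s) x t
      + lm * (φ x t - u x t) + γ * pdt φ x t + β * pdx (pdt w) x t = 0
  eq3 : ∀ x ∈ Ioo (0:ℝ) L, ∀ t : ℝ, 0 < t →
    -b * pdx (pdx ψ) x t + K * (pdx φ x t + ψ x t) = 0
  eq4 : ∀ x ∈ Ioo (0:ℝ) L, ∀ t : ℝ, 0 < t →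
    ρ₃ * pdt (pdt w) x t - δ * pdx (pdx w) x t + β * pdx (pdt φ) x t
      - κ * pdx (pdx (pdt w)) x t = 0
  bc : ∀ t : ℝ, 0 ≤ t →
    u 0 t = 0 ∧ u L t = 0 ∧ φ 0 t = 0 ∧ φ L t = 0 ∧
    ψ 0 t = 0 ∧ ψ L t = 0 ∧ w 0 t = 0 ∧ w L t = 0

/-- The energy functional of the system. -/
def energy (L ρ α lm ρ₁ K b ρ₃ δ : ℝ) (u φ ψ w : ℝ → ℝ → ℝ) (t : ℝ) : ℝ :=
  (1/2) * ∫ x in (0:ℝ)..L,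
    (ρ * (pdt u x t)^2 + α * (pdx u x t)^2 + lm * (φ x t - u x t)^2
      + ρ₁ * (pdt φ x t)^2 + K * (pdx φ x t + ψ x t)^2 + b * (pdx ψ x t)^2
      + ρ₃ * (pdt w x t)^2 + δ * (pdx w x t)^2)

/-!
Multiplying the four equations by `u_t`, `φ_t`, `ψ_t` and `w_t` and adding gives a local balance
law `e_t = G_x - 2 (μ u_t² + γ φ_t² + κ w_xt²)` for the energy density `e` (with `E = ½ ∫ e`) and
an explicit flux `G`. Every term of `G` contains a time derivative of `u`, `φ`, `ψ` or `w`, which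
vanishes at `x = 0` and `x = L` by the Dirichlet conditions, so integrating over `[0, L]` gives
`E'(t) = -∫ (μ u_t² + γ φ_t² + κ w_xt²) ≤ 0`.
-/

open Function

section PartialDeriv

variable {f : ℝ → ℝ → ℝ}

lemma hasDerivAt_pdt (hf : Differentiable ℝ (uncurry f)) (x t : ℝ) :
    HasDerivAt (f x ·) (pdt f x t) t :=
  ((hf (x, t)).comp t ((differentiableAt_const x).prodMk differentiableAt_id)).hasDerivAt

lemma hasDerivAt_pdx (hf : Differentiable ℝ (uncurry f)) (x t : ℝ) :
    HasDerivAt (f · t) (pdx f x t) x :=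
  ((hf (x, t)).comp (f := fun y : ℝ => (y, t)) x
    (differentiableAt_fun_id.prodMk (differentiableAt_const t))).hasDerivAt

lemma uncurry_pdt_eq_fderiv (hf : Differentiable ℝ (uncurry f)) :
    uncurry (pdt f) = fun p => fderiv ℝ (uncurry f) p (0, 1) :=
  funext fun p => (hasDerivAt_pdt hf p.1 p.2).unique <|
    (hf p).hasFDerivAt.comp_hasDerivAt (l := uncurry f) p.2
      ((hasDerivAt_const p.2 p.1).prodMk (hasDerivAt_id' p.2))

lemma uncurry_pdx_eq_fderiv (hf : Differentiable ℝ (uncurry f)) :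
    uncurry (pdx f) = fun p => fderiv ℝ (uncurry f) p (1, 0) :=
  funext fun p => (hasDerivAt_pdx hf p.1 p.2).unique <|
    (hf p).hasFDerivAt.comp_hasDerivAt (l := uncurry f) p.1
      ((hasDerivAt_id' p.1).prodMk (hasDerivAt_const p.1 p.2))

lemma pdt_eq_zero_of_forall_nonneg {x₀ t : ℝ} (hf : ∀ s, 0 ≤ s → f x₀ s = 0) (ht : 0 < t) :
    pdt f x₀ t = 0 := by
  have : (f x₀ ·) =ᶠ[nhds t] fun _ => 0 :=
    Filter.mem_of_superset (Ioi_mem_nhds ht) fun s hs => hf s (le_of_lt hs)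
  rw [pdt, this.deriv_eq, deriv_const]

variable {m n : WithTop ℕ∞}

lemma contDiff_pdt (hf : ContDiff ℝ n (uncurry f)) (hmn : m + 1 ≤ n) :
    ContDiff ℝ m (uncurry (pdt f)) := by
  rw [uncurry_pdt_eq_fderiv ((hf.of_le (le_add_self.trans hmn)).differentiable one_ne_zero)]
  exact (hf.fderiv_right hmn).clm_apply contDiff_const

lemma contDiff_pdx (hf : ContDiff ℝ n (uncurry f)) (hmn : m + 1 ≤ n) :
    ContDiff ℝ m (uncurry (pdx f)) := by
  rw [uncurry_pdx_eq_fderiv ((hf.of_le (le_add_self.trans hmn)).differentiable one_ne_zero)]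
  exact (hf.fderiv_right hmn).clm_apply contDiff_const

lemma differentiable_pdt (hf : ContDiff ℝ 2 (uncurry f)) : Differentiable ℝ (uncurry (pdt f)) :=
  (contDiff_pdt hf (m := 1) (by norm_num)).differentiable one_ne_zero

lemma differentiable_pdx (hf : ContDiff ℝ 2 (uncurry f)) : Differentiable ℝ (uncurry (pdx f)) :=
  (contDiff_pdx hf (m := 1) (by norm_num)).differentiable one_ne_zero

lemma pdt_pdx_comm (hf : ContDiff ℝ 2 (uncurry f)) (x t : ℝ) :
    pdt (pdx f) x t = pdx (pdt f) x t := by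
  have hd : Differentiable ℝ (fderiv ℝ (uncurry f)) :=
    (hf.fderiv_right (m := 1) (by norm_num)).differentiable one_ne_zero
  have hf₁ : Differentiable ℝ (uncurry f) := hf.differentiable two_ne_zero
  change uncurry (pdt (pdx f)) (x, t) = uncurry (pdx (pdt f)) (x, t)
  rw [uncurry_pdt_eq_fderiv (differentiable_pdx hf), uncurry_pdx_eq_fderiv (differentiable_pdt hf),
    uncurry_pdx_eq_fderiv hf₁, uncurry_pdt_eq_fderiv hf₁]
  beta_reduce
  rw [fderiv_clm_apply (hd _) (differentiableAt_const _),
    fderiv_clm_apply (hd _) (differentiableAt_const _)]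
  simpa using (hf.contDiffAt.isSymmSndFDerivAt (by simp)).eq (0, 1) (1, 0)

end PartialDeriv

section EnergyMethod

variable {f e G : ℝ → ℝ → ℝ}

lemma hasDerivAt_intervalIntegral_pdt (hf : ContDiff ℝ 1 (uncurry f)) (a b t₀ : ℝ) :
    HasDerivAt (fun t => ∫ x in a..b, f x t) (∫ x in a..b, pdt f x t₀) t₀ := by
  have hd : Differentiable ℝ (uncurry f) := hf.differentiable one_ne_zero
  have hc : Continuous (uncurry (pdt f)) := (contDiff_pdt hf (m := 0) (by simp)).continuous
  obtain ⟨M, hM⟩ : ∃ M, ∀ p ∈ uIcc a b ×ˢ Metric.closedBall t₀ 1, ‖uncurry (pdt f) p‖ ≤ M :=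
    (isCompact_uIcc.prod (isCompact_closedBall t₀ 1)).exists_bound_of_continuousOn hc.continuousOn
  refine (intervalIntegral.hasDerivAt_integral_of_dominated_loc_of_deriv_le (μ := volume)
    (F := fun t x => f x t) (F' := fun t x => pdt f x t) (bound := fun _ => M)
    (Metric.closedBall_mem_nhds t₀ one_pos) ?_ ?_ ?_ ?_ intervalIntegrable_const ?_).2
  · exact .of_forall fun t => (hd.continuous.uncurry_right t).aestronglyMeasurable
  · exact (hd.continuous.uncurry_right t₀).intervalIntegrable a b
  · exact (hc.uncurry_right t₀).aestronglyMeasurable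
  · exact .of_forall fun x hx t ht => hM (x, t) ⟨uIoc_subset_uIcc hx, ht⟩
  · exact .of_forall fun x _ t _ => hasDerivAt_pdt hd x t

lemma antitoneOn_intervalIntegral_of_pdt_le_pdx {L : ℝ} (hL : 0 ≤ L)
    (he : ContDiff ℝ 1 (uncurry e)) (hG : ContDiff ℝ 1 (uncurry G))
    (hG₀ : ∀ t, 0 < t → G 0 t = 0) (hGL : ∀ t, 0 < t → G L t = 0)
    (hloc : ∀ x ∈ Ioo 0 L, ∀ t, 0 < t → pdt e x t ≤ pdx G x t) :
    AntitoneOn (fun t => ∫ x in 0..L, e x t) (Ici 0) := by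
  have hE t := hasDerivAt_intervalIntegral_pdt he 0 L t
  have hE' : Differentiable ℝ (fun t => ∫ x in 0..L, e x t) := fun t => (hE t).differentiableAt
  refine antitoneOn_of_deriv_nonpos (convex_Ici 0) hE'.continuous.continuousOn
    hE'.differentiableOn fun t ht => ?_
  rw [interior_Ici, mem_Ioi] at ht
  have het : Continuous (pdt e · t) :=
    (contDiff_pdt he (m := 0) (by simp)).continuous.uncurry_right t
  have hGx : Continuous (pdx G · t) :=
    (contDiff_pdx hG (m := 0) (by simp)).continuous.uncurry_right t
  calc deriv (fun t => ∫ x in 0..L, e x t) t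
      = ∫ x in 0..L, pdt e x t := (hE t).deriv
    _ ≤ ∫ x in 0..L, pdx G x t :=
      intervalIntegral.integral_mono_on_of_le_Ioo hL (het.intervalIntegrable 0 L)
        (hGx.intervalIntegrable 0 L) fun x hx => hloc x hx t ht
    _ = G L t - G 0 t := intervalIntegral.integral_eq_sub_of_hasDerivAt
        (fun x _ => hasDerivAt_pdx (hG.differentiable one_ne_zero) x t) (hGx.intervalIntegrable 0 L)
    _ = 0 := by rw [hG₀ t ht, hGL t ht, sub_zero]

end EnergyMethod

def energyDensity (ρ α lm ρ₁ K b ρ₃ δ : ℝ) (u φ ψ w : ℝ → ℝ → ℝ) (x t : ℝ) : ℝ :=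
  ρ * (pdt u x t)^2 + α * (pdx u x t)^2 + lm * (φ x t - u x t)^2
    + ρ₁ * (pdt φ x t)^2 + K * (pdx φ x t + ψ x t)^2 + b * (pdx ψ x t)^2
    + ρ₃ * (pdt w x t)^2 + δ * (pdx w x t)^2

def energyFlux (α K b δ κ β : ℝ) (u φ ψ w : ℝ → ℝ → ℝ) (x t : ℝ) : ℝ :=
  2 * (α * (pdx u x t * pdt u x t) + K * ((pdx φ x t + ψ x t) * pdt φ x t)
    + b * (pdx ψ x t * pdt ψ x t) + δ * (pdx w x t * pdt w x t)
    + κ * (pdx (pdt w) x t * pdt w x t) - β * (pdt φ x t * pdt w x t))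

section ShearBeam

variable {ρ α lm ρ₁ K b ρ₃ δ κ β : ℝ} {u φ ψ w : ℝ → ℝ → ℝ}

lemma contDiff_energyDensity (hu : ContDiff ℝ 2 (uncurry u)) (hφ : ContDiff ℝ 2 (uncurry φ))
    (hψ : ContDiff ℝ 2 (uncurry ψ)) (hw : ContDiff ℝ 2 (uncurry w)) :
    ContDiff ℝ 1 (uncurry (energyDensity ρ α lm ρ₁ K b ρ₃ δ u φ ψ w)) := by
  have h : (1 : WithTop ℕ∞) + 1 ≤ 2 := by norm_num
  have := contDiff_pdt hu h
  have := contDiff_pdx hu h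
  have := contDiff_pdt hφ h
  have := contDiff_pdx hφ h
  have := contDiff_pdx hψ h
  have := contDiff_pdt hw h
  have := contDiff_pdx hw h
  have := hu.of_le one_le_two
  have := hφ.of_le one_le_two
  have := hψ.of_le one_le_two
  unfold uncurry energyDensity
  fun_prop

lemma contDiff_energyFlux (hu : ContDiff ℝ 2 (uncurry u)) (hφ : ContDiff ℝ 2 (uncurry φ))
    (hψ : ContDiff ℝ 2 (uncurry ψ)) (hw : ContDiff ℝ 3 (uncurry w)) :
    ContDiff ℝ 1 (uncurry (energyFlux α K b δ κ β u φ ψ w)) := by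
  have h : (1 : WithTop ℕ∞) + 1 ≤ 2 := by norm_num
  have := contDiff_pdt hu h
  have := contDiff_pdx hu h
  have := contDiff_pdt hφ h
  have := contDiff_pdx hφ h
  have := contDiff_pdt hψ h
  have := contDiff_pdx hψ h
  have := contDiff_pdt (hw.of_le (by norm_num)) h
  have := contDiff_pdx (hw.of_le (by norm_num)) h
  have := contDiff_pdx (contDiff_pdt hw (m := 2) (by norm_num)) h
  have := hψ.of_le one_le_two
  unfold uncurry energyFlux
  fun_prop

lemma pdt_energyDensity (hu : ContDiff ℝ 2 (uncurry u)) (hφ : ContDiff ℝ 2 (uncurry φ))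
    (hψ : ContDiff ℝ 2 (uncurry ψ)) (hw : ContDiff ℝ 2 (uncurry w)) (x t : ℝ) :
    pdt (energyDensity ρ α lm ρ₁ K b ρ₃ δ u φ ψ w) x t =
      2 * (ρ * pdt u x t * pdt (pdt u) x t + α * pdx u x t * pdt (pdx u) x t
        + lm * (φ x t - u x t) * (pdt φ x t - pdt u x t) + ρ₁ * pdt φ x t * pdt (pdt φ) x t
        + K * (pdx φ x t + ψ x t) * (pdt (pdx φ) x t + pdt ψ x t)
        + b * pdx ψ x t * pdt (pdx ψ) x t + ρ₃ * pdt w x t * pdt (pdt w) x t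
        + δ * pdx w x t * pdt (pdx w) x t) := by
  have ut := hasDerivAt_pdt (differentiable_pdt hu) x t
  have ux := hasDerivAt_pdt (differentiable_pdx hu) x t
  have u₀ := hasDerivAt_pdt (hu.differentiable two_ne_zero) x t
  have φt := hasDerivAt_pdt (differentiable_pdt hφ) x t
  have φx := hasDerivAt_pdt (differentiable_pdx hφ) x t
  have φ₀ := hasDerivAt_pdt (hφ.differentiable two_ne_zero) x t
  have ψx := hasDerivAt_pdt (differentiable_pdx hψ) x t
  have ψ₀ := hasDerivAt_pdt (hψ.differentiable two_ne_zero) x t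
  have wt := hasDerivAt_pdt (differentiable_pdt hw) x t
  have wx := hasDerivAt_pdt (differentiable_pdx hw) x t
  refine ((((((((ut.pow 2).const_mul ρ).fun_add ((ux.pow 2).const_mul α)).fun_add
    (((φ₀.fun_sub u₀).pow 2).const_mul lm)).fun_add ((φt.pow 2).const_mul ρ₁)).fun_add
    (((φx.fun_add ψ₀).pow 2).const_mul K)).fun_add ((ψx.pow 2).const_mul b)).fun_add
    ((wt.pow 2).const_mul ρ₃)).fun_add ((wx.pow 2).const_mul δ) |>.deriv.trans ?_
  ring

lemma pdx_energyFlux (hu : ContDiff ℝ 2 (uncurry u)) (hφ : ContDiff ℝ 2 (uncurry φ))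
    (hψ : ContDiff ℝ 2 (uncurry ψ)) (hw : ContDiff ℝ 3 (uncurry w)) (x t : ℝ) :
    pdx (energyFlux α K b δ κ β u φ ψ w) x t =
      2 * (α * (pdx (pdx u) x t * pdt u x t + pdx u x t * pdx (pdt u) x t)
        + K * ((pdx (pdx φ) x t + pdx ψ x t) * pdt φ x t
          + (pdx φ x t + ψ x t) * pdx (pdt φ) x t)
        + b * (pdx (pdx ψ) x t * pdt ψ x t + pdx ψ x t * pdx (pdt ψ) x t)
        + δ * (pdx (pdx w) x t * pdt w x t + pdx w x t * pdx (pdt w) x t)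
        + κ * (pdx (pdx (pdt w)) x t * pdt w x t + pdx (pdt w) x t * pdx (pdt w) x t)
        - β * (pdx (pdt φ) x t * pdt w x t + pdt φ x t * pdx (pdt w) x t)) := by
  have hw₂ : ContDiff ℝ 2 (uncurry w) := hw.of_le (by norm_num)
  have ut := hasDerivAt_pdx (differentiable_pdt hu) x t
  have ux := hasDerivAt_pdx (differentiable_pdx hu) x t
  have φt := hasDerivAt_pdx (differentiable_pdt hφ) x t
  have φx := hasDerivAt_pdx (differentiable_pdx hφ) x t
  have ψt := hasDerivAt_pdx (differentiable_pdt hψ) x t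
  have ψx := hasDerivAt_pdx (differentiable_pdx hψ) x t
  have ψ₀ := hasDerivAt_pdx (hψ.differentiable two_ne_zero) x t
  have wt := hasDerivAt_pdx (differentiable_pdt hw₂) x t
  have wx := hasDerivAt_pdx (differentiable_pdx hw₂) x t
  have wtx := hasDerivAt_pdx (differentiable_pdx (contDiff_pdt hw (m := 2) (by norm_num))) x t
  refine (((((((ux.fun_mul ut).const_mul α).fun_add
    (((φx.fun_add ψ₀).fun_mul φt).const_mul K)).fun_add ((ψx.fun_mul ψt).const_mul b)).fun_add
    ((wx.fun_mul wt).const_mul δ)).fun_add ((wtx.fun_mul wt).const_mul κ)).fun_sub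
    ((φt.fun_mul wt).const_mul β)).const_mul 2 |>.deriv.trans ?_
  ring

lemma energyFlux_eq_zero_of_forall_nonneg {x₀ t : ℝ} (ht : 0 < t)
    (hu : ∀ s, 0 ≤ s → u x₀ s = 0) (hφ : ∀ s, 0 ≤ s → φ x₀ s = 0)
    (hψ : ∀ s, 0 ≤ s → ψ x₀ s = 0) (hw : ∀ s, 0 ≤ s → w x₀ s = 0) :
    energyFlux α K b δ κ β u φ ψ w x₀ t = 0 := by
  simp [energyFlux, pdt_eq_zero_of_forall_nonneg hu ht, pdt_eq_zero_of_forall_nonneg hφ ht,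
    pdt_eq_zero_of_forall_nonneg hψ ht, pdt_eq_zero_of_forall_nonneg hw ht]

end ShearBeam

section ShearBeamSolution

variable {L ρ α lm μ ρ₁ K γ b ρ₃ δ κ β x t : ℝ} {u φ ψ w : ℝ → ℝ → ℝ}

lemma IsShearSolution.pdt_energyDensity_eq
    (hsol : IsShearSolution L ρ α lm μ ρ₁ K γ b ρ₃ δ κ β u φ ψ w) (hx : x ∈ Ioo 0 L) (ht : 0 < t) :
    pdt (energyDensity ρ α lm ρ₁ K b ρ₃ δ u φ ψ w) x t =
      pdx (energyFlux α K b δ κ β u φ ψ w) x t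
        - 2 * (μ * pdt u x t ^ 2 + γ * pdt φ x t ^ 2 + κ * pdx (pdt w) x t ^ 2) := by
  obtain ⟨hu, hφ, hψ, hw, e₁, e₂, e₃, e₄, -⟩ := hsol
  have hu₂ : ContDiff ℝ 2 (uncurry u) := hu.of_le (by norm_num)
  have hφ₂ : ContDiff ℝ 2 (uncurry φ) := hφ.of_le (by norm_num)
  have hψ₂ : ContDiff ℝ 2 (uncurry ψ) := hψ.of_le (by norm_num)
  have hw₂ : ContDiff ℝ 2 (uncurry w) := hw.of_le (by norm_num)
  have hsplit : pdx (fun y s => pdx φ y s + ψ y s) x t = pdx (pdx φ) x t + pdx ψ x t :=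
    ((hasDerivAt_pdx (differentiable_pdx hφ₂) x t).fun_add
      (hasDerivAt_pdx (hψ₂.differentiable two_ne_zero) x t)).deriv
  rw [pdt_energyDensity hu₂ hφ₂ hψ₂ hw₂, pdx_energyFlux hu₂ hφ₂ hψ₂ hw, pdt_pdx_comm hu₂,
    pdt_pdx_comm hφ₂, pdt_pdx_comm hψ₂, pdt_pdx_comm hw₂]
  linear_combination 2 * pdt u x t * e₁ x hx t ht + 2 * pdt φ x t * e₂ x hx t ht
    + 2 * pdt ψ x t * e₃ x hx t ht + 2 * pdt w x t * e₄ x hx t ht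
    + 2 * K * pdt φ x t * hsplit

lemma IsShearSolution.energyFlux_eq_zero
    (hsol : IsShearSolution L ρ α lm μ ρ₁ K γ b ρ₃ δ κ β u φ ψ w) (ht : 0 < t) :
    energyFlux α K b δ κ β u φ ψ w 0 t = 0 ∧ energyFlux α K b δ κ β u φ ψ w L t = 0 := by
  constructor <;> apply energyFlux_eq_zero_of_forall_nonneg ht <;> intro s hs <;>
    simp [hsol.bc s hs]

end ShearBeamSolution

theorem energy_nonincreasing_general
    {L ρ α lm μ ρ₁ K γ b ρ₃ δ κ β : ℝ}
    (hL : 0 < L) (hμ : 0 < μ) (hγ : 0 < γ) (hκ : 0 < κ)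
    {u φ ψ w : ℝ → ℝ → ℝ}
    (hsol : IsShearSolution L ρ α lm μ ρ₁ K γ b ρ₃ δ κ β u φ ψ w) :
    (∀ s t : ℝ, 0 ≤ s → s ≤ t →
      energy L ρ α lm ρ₁ K b ρ₃ δ u φ ψ w t ≤ energy L ρ α lm ρ₁ K b ρ₃ δ u φ ψ w s) ∧
    (∀ t : ℝ, 0 ≤ t →
      energy L ρ α lm ρ₁ K b ρ₃ δ u φ ψ w t ≤ energy L ρ α lm ρ₁ K b ρ₃ δ u φ ψ w 0) := by
  have h₂ {f : ℝ → ℝ → ℝ} (hf : ContDiff ℝ 3 (uncurry f)) : ContDiff ℝ 2 (uncurry f) :=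
    hf.of_le (by norm_num)
  have hu := h₂ hsol.smooth_u
  have hφ := h₂ hsol.smooth_phi
  have hψ := h₂ hsol.smooth_psi
  have hdensity := antitoneOn_intervalIntegral_of_pdt_le_pdx hL.le
    (contDiff_energyDensity hu hφ hψ (h₂ hsol.smooth_w))
    (contDiff_energyFlux hu hφ hψ hsol.smooth_w)
    (fun t ht => (hsol.energyFlux_eq_zero ht).1) (fun t ht => (hsol.energyFlux_eq_zero ht).2)
    fun x hx t ht => (hsol.pdt_energyDensity_eq hx ht).trans_le (sub_le_self _ (by positivity))
  have hE : AntitoneOn (energy L ρ α lm ρ₁ K b ρ₃ δ u φ ψ w) (Ici 0) :=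
    fun s hs t ht hst => mul_le_mul_of_nonneg_left (hdensity hs ht hst) one_half_pos.le
  exact ⟨fun s t hs hst => hE hs (hs.trans hst) hst, fun t ht => hE self_mem_Ici ht ht⟩

/-- the energy is nonincreasing. -/
theorem energy_nonincreasing
    {L ρ α lm μ ρ₁ K γ b ρ₃ δ κ β : ℝ}
    (hL : 0 < L) (hρ : 0 < ρ) (hα : 0 < α) (hlm : 0 < lm) (hμ : 0 < μ)
    (hρ₁ : 0 < ρ₁) (hK : 0 < K) (hγ : 0 < γ) (hb : 0 < b) (hρ₃ : 0 < ρ₃)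
    (hδ : 0 < δ) (hκ : 0 < κ) (hβ : β ≠ 0)
    {u φ ψ w : ℝ → ℝ → ℝ}
    (hsol : IsShearSolution L ρ α lm μ ρ₁ K γ b ρ₃ δ κ β u φ ψ w) :
    (∀ s t : ℝ, 0 ≤ s → s ≤ t →
      energy L ρ α lm ρ₁ K b ρ₃ δ u φ ψ w t ≤ energy L ρ α lm ρ₁ K b ρ₃ δ u φ ψ w s) ∧
    (∀ t : ℝ, 0 ≤ t →
      energy L ρ α lm ρ₁ K b ρ₃ δ u φ ψ w t ≤ energy L ρ α lm ρ₁ K b ρ₃ δ u φ ψ w 0) :=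
  energy_nonincreasing_general hL hμ hγ hκ hsol
end
end

section
/- Let (u, φ, ψ, w) be a classical solution of the suspension-bridge Shear beam system in thermoelasticity of type III, let c_p > 0 be a Poincaré constant for (0,L), and define I₁(t) = ∫₀^L ( ρ u_t u + (μ/2) u² ) dx + ∫₀^L ( ρ₁ φ_t φ + (γ/2) φ² ) dx and I₂(t) = ρ₃ ∫₀^L w_t w dx + (κ/2) ∫₀^L w_x² dx + β ∫₀^L φ_x w dx. Then there exists a constant ξ > 0, depending only on the constitutive constants, L, c_p and not on the solution, such that |I₁(t) + I₂(t)| ≤ ξ E(t) for all t ≥ 0. Consequently, for every N > ξ the Lyapunov functional L(t) = N E(t) + I₁(t) + I₂(t) satisfies (N−ξ) E(t) ≤ L(t) ≤ (N+ξ) E(t) for all t ≥ 0. -/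
open MeasureTheory Set

noncomputable section

/-- The auxiliary functional I₁. -/
def I1 (L ρ μ ρ₁ γ : ℝ) (u φ : ℝ → ℝ → ℝ) (t : ℝ) : ℝ :=
  (∫ x in (0:ℝ)..L, (ρ * pdt u x t * u x t + μ / 2 * (u x t)^2))
    + ∫ x in (0:ℝ)..L, (ρ₁ * pdt φ x t * φ x t + γ / 2 * (φ x t)^2)

/-- The auxiliary functional I₂. -/
def I2 (L ρ₃ κ β : ℝ) (φ w : ℝ → ℝ → ℝ) (t : ℝ) : ℝ :=
  ρ₃ * (∫ x in (0:ℝ)..L, pdt w x t * w x t)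
    + κ / 2 * (∫ x in (0:ℝ)..L, (pdx w x t)^2)
    + β * ∫ x in (0:ℝ)..L, pdx φ x t * w x t

/-!
Every term of `I₁ + I₂` has the form `c ∫ f g`, so Young's inequality bounds `|I₁ + I₂|` by the
squared `L²` norms of `u, u_t, φ, φ_t, φ_x, w, w_t, w_x`. By Poincaré's inequality, and since
`φ_x = (φ_x + ψ) - ψ`, each of these is at most `2 (1 + c_p)²` times the sum `S` of the squared
norms of the seven energy variables `u_t, u_x, φ_t, φ_x + ψ, ψ_x, w_t, w_x`, while each weighted
term of the energy is at most `2 E`, so that `S ≤ 2 (ρ⁻¹ + α⁻¹ + ρ₁⁻¹ + K⁻¹ + b⁻¹ + ρ₃⁻¹ + δ⁻¹) E`.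
-/

open Function

section SliceRegularity

variable {f : ℝ → ℝ → ℝ}

theorem pdt_eq_fderiv {x t : ℝ} (hf : DifferentiableAt ℝ (uncurry f) (x, t)) :
    pdt f x t = fderiv ℝ (uncurry f) (x, t) (0, 1) :=
  (hf.hasFDerivAt.comp_hasDerivAt t ((hasDerivAt_const t x).prodMk (hasDerivAt_id t))).deriv

theorem pdx_eq_fderiv {x t : ℝ} (hf : DifferentiableAt ℝ (uncurry f) (x, t)) :
    pdx f x t = fderiv ℝ (uncurry f) (x, t) (1, 0) :=
  (hf.hasFDerivAt.comp_hasDerivAt (f := fun y => (y, t)) x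
    ((hasDerivAt_id x).prodMk (hasDerivAt_const x t))).deriv

theorem ContDiff.contDiff_slice (hf : ContDiff ℝ 1 (uncurry f)) (t : ℝ) :
    ContDiff ℝ 1 fun x => f x t :=
  hf.comp (contDiff_prodMk_left t)

theorem ContDiff.continuous_fderiv_slice (hf : ContDiff ℝ 1 (uncurry f)) (t : ℝ) (v : ℝ × ℝ) :
    Continuous fun x => fderiv ℝ (uncurry f) (x, t) v :=
  ((hf.continuous_fderiv one_ne_zero).comp (continuous_id.prodMk continuous_const)).clm_apply
    continuous_const

theorem ContDiff.continuous_pdt_slice (hf : ContDiff ℝ 1 (uncurry f)) (t : ℝ) :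
    Continuous fun x => pdt f x t := by
  simpa only [pdt_eq_fderiv (hf.differentiable one_ne_zero _)]
    using hf.continuous_fderiv_slice t (0, 1)

theorem ContDiff.continuous_pdx_slice (hf : ContDiff ℝ 1 (uncurry f)) (t : ℝ) :
    Continuous fun x => pdx f x t := by
  simpa only [pdx_eq_fderiv (hf.differentiable one_ne_zero _)]
    using hf.continuous_fderiv_slice t (1, 0)

end SliceRegularity

section IntervalIntegral

variable {a b : ℝ} {f g : ℝ → ℝ}

theorem abs_integral_mul_le_half_add (hab : a ≤ b) (hf : Continuous f) (hg : Continuous g) :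
    |∫ x in a..b, f x * g x| ≤ ((∫ x in a..b, f x ^ 2) + ∫ x in a..b, g x ^ 2) / 2 :=
  calc |∫ x in a..b, f x * g x|
      ≤ ∫ x in a..b, |f x * g x| := intervalIntegral.abs_integral_le_integral_abs hab
    _ ≤ ∫ x in a..b, (f x ^ 2 + g x ^ 2) / 2 := by
        refine intervalIntegral.integral_mono_on hab ((hf.mul hg).abs.intervalIntegrable a b)
          (Continuous.intervalIntegrable (by fun_prop) a b) fun x _ => abs_le.mpr ⟨?_, ?_⟩
        · nlinarith [sq_nonneg (f x + g x)]
        · nlinarith [sq_nonneg (f x - g x)]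
    _ = ((∫ x in a..b, f x ^ 2) + ∫ x in a..b, g x ^ 2) / 2 := by
        simp (disch := exact Continuous.intervalIntegrable (by fun_prop) _ _) only
          [intervalIntegral.integral_div, intervalIntegral.integral_add]

theorem abs_mul_integral_mul_le {c B : ℝ} (hab : a ≤ b) (hf : Continuous f) (hg : Continuous g)
    (hfB : ∫ x in a..b, f x ^ 2 ≤ B) (hgB : ∫ x in a..b, g x ^ 2 ≤ B) :
    |c * ∫ x in a..b, f x * g x| ≤ |c| * B := by
  rw [abs_mul]
  gcongr
  linarith [abs_integral_mul_le_half_add hab hf hg]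

theorem integral_sq_le_two_mul_integral_add_sq (hab : a ≤ b) (hf : Continuous f)
    (hg : Continuous g) :
    ∫ x in a..b, f x ^ 2 ≤ 2 * (∫ x in a..b, (f x + g x) ^ 2) + 2 * ∫ x in a..b, g x ^ 2 :=
  calc ∫ x in a..b, f x ^ 2
      ≤ ∫ x in a..b, (2 * (f x + g x) ^ 2 + 2 * g x ^ 2) :=
        intervalIntegral.integral_mono_on hab (Continuous.intervalIntegrable (by fun_prop) a b)
          (Continuous.intervalIntegrable (by fun_prop) a b)
          fun x _ => by nlinarith [sq_nonneg (f x + 2 * g x)]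
    _ = 2 * (∫ x in a..b, (f x + g x) ^ 2) + 2 * ∫ x in a..b, g x ^ 2 := by
        simp (disch := exact Continuous.intervalIntegrable (by fun_prop) _ _) only
          [intervalIntegral.integral_const_mul, intervalIntegral.integral_add]

end IntervalIntegral

def energyNormSq (L : ℝ) (u φ ψ w : ℝ → ℝ → ℝ) (t : ℝ) : ℝ :=
  (∫ x in (0:ℝ)..L, pdt u x t ^ 2) + (∫ x in (0:ℝ)..L, pdx u x t ^ 2)
    + (∫ x in (0:ℝ)..L, pdt φ x t ^ 2) + (∫ x in (0:ℝ)..L, (pdx φ x t + ψ x t) ^ 2)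
    + (∫ x in (0:ℝ)..L, pdx ψ x t ^ 2) + (∫ x in (0:ℝ)..L, pdt w x t ^ 2)
    + ∫ x in (0:ℝ)..L, pdx w x t ^ 2

section ShearBeam

variable {L : ℝ} {u φ ψ w : ℝ → ℝ → ℝ}

theorem energyNormSq_le_energy {ρ α lm ρ₁ K b ρ₃ δ : ℝ} (hL : 0 ≤ L) (hρ : 0 < ρ) (hα : 0 < α)
    (hlm : 0 ≤ lm) (hρ₁ : 0 < ρ₁) (hK : 0 < K) (hb : 0 < b) (hρ₃ : 0 < ρ₃) (hδ : 0 < δ)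
    (hu : ContDiff ℝ 1 (uncurry u)) (hφ : ContDiff ℝ 1 (uncurry φ))
    (hψ : ContDiff ℝ 1 (uncurry ψ)) (hw : ContDiff ℝ 1 (uncurry w)) (t : ℝ) :
    energyNormSq L u φ ψ w t
      ≤ 2 * (ρ⁻¹ + α⁻¹ + ρ₁⁻¹ + K⁻¹ + b⁻¹ + ρ₃⁻¹ + δ⁻¹)
        * energy L ρ α lm ρ₁ K b ρ₃ δ u φ ψ w t := by
  have := hu.contDiff_slice t |>.continuous
  have := hφ.contDiff_slice t |>.continuous
  have := hψ.contDiff_slice t |>.continuous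
  have := hu.continuous_pdt_slice t
  have := hu.continuous_pdx_slice t
  have := hφ.continuous_pdt_slice t
  have := hφ.continuous_pdx_slice t
  have := hψ.continuous_pdx_slice t
  have := hw.continuous_pdt_slice t
  have := hw.continuous_pdx_slice t
  have hsq (g : ℝ → ℝ) : 0 ≤ ∫ x in (0:ℝ)..L, g x ^ 2 :=
    intervalIntegral.integral_nonneg hL fun x _ => sq_nonneg _
  have hE : 2 * energy L ρ α lm ρ₁ K b ρ₃ δ u φ ψ w t
      = ρ * (∫ x in (0:ℝ)..L, pdt u x t ^ 2) + α * (∫ x in (0:ℝ)..L, pdx u x t ^ 2)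
        + lm * (∫ x in (0:ℝ)..L, (φ x t - u x t) ^ 2) + ρ₁ * (∫ x in (0:ℝ)..L, pdt φ x t ^ 2)
        + K * (∫ x in (0:ℝ)..L, (pdx φ x t + ψ x t) ^ 2) + b * (∫ x in (0:ℝ)..L, pdx ψ x t ^ 2)
        + ρ₃ * (∫ x in (0:ℝ)..L, pdt w x t ^ 2) + δ * ∫ x in (0:ℝ)..L, pdx w x t ^ 2 := by
    unfold energy
    simp (disch := exact Continuous.intervalIntegrable (by fun_prop) _ _) only
      [intervalIntegral.integral_add, intervalIntegral.integral_const_mul]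
    ring
  have := mul_nonneg hρ.le (hsq fun x => pdt u x t)
  have := mul_nonneg hα.le (hsq fun x => pdx u x t)
  have := mul_nonneg hlm (hsq fun x => φ x t - u x t)
  have := mul_nonneg hρ₁.le (hsq fun x => pdt φ x t)
  have := mul_nonneg hK.le (hsq fun x => pdx φ x t + ψ x t)
  have := mul_nonneg hb.le (hsq fun x => pdx ψ x t)
  have := mul_nonneg hρ₃.le (hsq fun x => pdt w x t)
  have := mul_nonneg hδ.le (hsq fun x => pdx w x t)
  set E := energy L ρ α lm ρ₁ K b ρ₃ δ u φ ψ w t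
  have h1 : ∫ x in (0:ℝ)..L, pdt u x t ^ 2 ≤ ρ⁻¹ * (2 * E) := (le_inv_mul_iff₀ hρ).2 (by linarith)
  have h2 : ∫ x in (0:ℝ)..L, pdx u x t ^ 2 ≤ α⁻¹ * (2 * E) := (le_inv_mul_iff₀ hα).2 (by linarith)
  have h3 : ∫ x in (0:ℝ)..L, pdt φ x t ^ 2 ≤ ρ₁⁻¹ * (2 * E) :=
    (le_inv_mul_iff₀ hρ₁).2 (by linarith)
  have h4 : ∫ x in (0:ℝ)..L, (pdx φ x t + ψ x t) ^ 2 ≤ K⁻¹ * (2 * E) :=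
    (le_inv_mul_iff₀ hK).2 (by linarith)
  have h5 : ∫ x in (0:ℝ)..L, pdx ψ x t ^ 2 ≤ b⁻¹ * (2 * E) := (le_inv_mul_iff₀ hb).2 (by linarith)
  have h6 : ∫ x in (0:ℝ)..L, pdt w x t ^ 2 ≤ ρ₃⁻¹ * (2 * E) :=
    (le_inv_mul_iff₀ hρ₃).2 (by linarith)
  have h7 : ∫ x in (0:ℝ)..L, pdx w x t ^ 2 ≤ δ⁻¹ * (2 * E) := (le_inv_mul_iff₀ hδ).2 (by linarith)
  unfold energyNormSq
  linarith

theorem abs_I1_add_I2_le {ρ μ ρ₁ γ ρ₃ κ β B : ℝ} (hL : 0 ≤ L)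
    (hu : ContDiff ℝ 1 (uncurry u)) (hφ : ContDiff ℝ 1 (uncurry φ))
    (hw : ContDiff ℝ 1 (uncurry w)) (t : ℝ)
    (hut : ∫ x in (0:ℝ)..L, pdt u x t ^ 2 ≤ B) (hu₀ : ∫ x in (0:ℝ)..L, u x t ^ 2 ≤ B)
    (hφt : ∫ x in (0:ℝ)..L, pdt φ x t ^ 2 ≤ B) (hφ₀ : ∫ x in (0:ℝ)..L, φ x t ^ 2 ≤ B)
    (hφx : ∫ x in (0:ℝ)..L, pdx φ x t ^ 2 ≤ B) (hwt : ∫ x in (0:ℝ)..L, pdt w x t ^ 2 ≤ B)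
    (hw₀ : ∫ x in (0:ℝ)..L, w x t ^ 2 ≤ B) (hwx : ∫ x in (0:ℝ)..L, pdx w x t ^ 2 ≤ B) :
    |I1 L ρ μ ρ₁ γ u φ t + I2 L ρ₃ κ β φ w t|
      ≤ (|ρ| + |μ / 2| + |ρ₁| + |γ / 2| + |ρ₃| + |κ / 2| + |β|) * B := by
  have cu := hu.contDiff_slice t |>.continuous
  have cφ := hφ.contDiff_slice t |>.continuous
  have cw := hw.contDiff_slice t |>.continuous
  have cut := hu.continuous_pdt_slice t
  have cφt := hφ.continuous_pdt_slice t
  have cφx := hφ.continuous_pdx_slice t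
  have cwt := hw.continuous_pdt_slice t
  have cwx := hw.continuous_pdx_slice t
  have hsplit : I1 L ρ μ ρ₁ γ u φ t + I2 L ρ₃ κ β φ w t
      = ρ * (∫ x in (0:ℝ)..L, pdt u x t * u x t) + μ / 2 * (∫ x in (0:ℝ)..L, u x t * u x t)
        + ρ₁ * (∫ x in (0:ℝ)..L, pdt φ x t * φ x t) + γ / 2 * (∫ x in (0:ℝ)..L, φ x t * φ x t)
        + ρ₃ * (∫ x in (0:ℝ)..L, pdt w x t * w x t)
        + κ / 2 * (∫ x in (0:ℝ)..L, pdx w x t * pdx w x t)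
        + β * ∫ x in (0:ℝ)..L, pdx φ x t * w x t := by
    unfold I1 I2
    simp (disch := exact Continuous.intervalIntegrable (by fun_prop) _ _) only
      [intervalIntegral.integral_add, intervalIntegral.integral_const_mul, mul_assoc, sq]
    ring
  have h1 := abs_le.1 (abs_mul_integral_mul_le (c := ρ) hL cut cu hut hu₀)
  have h2 := abs_le.1 (abs_mul_integral_mul_le (c := μ / 2) hL cu cu hu₀ hu₀)
  have h3 := abs_le.1 (abs_mul_integral_mul_le (c := ρ₁) hL cφt cφ hφt hφ₀)
  have h4 := abs_le.1 (abs_mul_integral_mul_le (c := γ / 2) hL cφ cφ hφ₀ hφ₀)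
  have h5 := abs_le.1 (abs_mul_integral_mul_le (c := ρ₃) hL cwt cw hwt hw₀)
  have h6 := abs_le.1 (abs_mul_integral_mul_le (c := κ / 2) hL cwx cwx hwx hwx)
  have h7 := abs_le.1 (abs_mul_integral_mul_le (c := β) hL cφx cw hφx hw₀)
  rw [hsplit, abs_le]
  constructor <;> linarith

theorem abs_I1_add_I2_le_energyNormSq {ρ μ ρ₁ γ ρ₃ κ β c_p : ℝ} (hL : 0 ≤ L) (hcp : 0 ≤ c_p)
    (hu : ContDiff ℝ 1 (uncurry u)) (hφ : ContDiff ℝ 1 (uncurry φ))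
    (hψ : ContDiff ℝ 1 (uncurry ψ)) (hw : ContDiff ℝ 1 (uncurry w)) (t : ℝ)
    (hPu : ∫ x in (0:ℝ)..L, u x t ^ 2 ≤ c_p * ∫ x in (0:ℝ)..L, pdx u x t ^ 2)
    (hPφ : ∫ x in (0:ℝ)..L, φ x t ^ 2 ≤ c_p * ∫ x in (0:ℝ)..L, pdx φ x t ^ 2)
    (hPψ : ∫ x in (0:ℝ)..L, ψ x t ^ 2 ≤ c_p * ∫ x in (0:ℝ)..L, pdx ψ x t ^ 2)
    (hPw : ∫ x in (0:ℝ)..L, w x t ^ 2 ≤ c_p * ∫ x in (0:ℝ)..L, pdx w x t ^ 2) :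
    |I1 L ρ μ ρ₁ γ u φ t + I2 L ρ₃ κ β φ w t|
      ≤ (|ρ| + |μ / 2| + |ρ₁| + |γ / 2| + |ρ₃| + |κ / 2| + |β|)
        * (2 * (1 + c_p) ^ 2 * energyNormSq L u φ ψ w t) := by
  have hsq (g : ℝ → ℝ) : 0 ≤ ∫ x in (0:ℝ)..L, g x ^ 2 :=
    intervalIntegral.integral_nonneg hL fun x _ => sq_nonneg _
  have := hsq fun x => pdt u x t
  have := hsq fun x => pdx u x t
  have := hsq fun x => pdt φ x t
  have := hsq fun x => pdx φ x t + ψ x t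
  have := hsq fun x => pdx ψ x t
  have := hsq fun x => pdt w x t
  have := hsq fun x => pdx w x t
  set S := energyNormSq L u φ ψ w t with hS
  unfold energyNormSq at hS
  have hS₀ : 0 ≤ S := by linarith
  have hφx : ∫ x in (0:ℝ)..L, pdx φ x t ^ 2 ≤ (2 + 2 * c_p) * S :=
    calc ∫ x in (0:ℝ)..L, pdx φ x t ^ 2
        ≤ 2 * (∫ x in (0:ℝ)..L, (pdx φ x t + ψ x t) ^ 2) + 2 * ∫ x in (0:ℝ)..L, ψ x t ^ 2 :=
          integral_sq_le_two_mul_integral_add_sq hL (hφ.continuous_pdx_slice t)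
            (hψ.contDiff_slice t).continuous
      _ ≤ (2 + 2 * c_p) * S := by nlinarith
  have hS_le (k : ℝ) (hk : k ≤ 2 * (1 + c_p) ^ 2) : k * S ≤ 2 * (1 + c_p) ^ 2 * S :=
    mul_le_mul_of_nonneg_right hk hS₀
  apply abs_I1_add_I2_le hL hu hφ hw t
  · nlinarith [hS_le 1 (by nlinarith)]
  · nlinarith [hS_le c_p (by nlinarith)]
  · nlinarith [hS_le 1 (by nlinarith)]
  · nlinarith [hS_le (c_p * (2 + 2 * c_p)) (by nlinarith)]
  · nlinarith [hS_le (2 + 2 * c_p) (by nlinarith)]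
  · nlinarith [hS_le 1 (by nlinarith)]
  · nlinarith [hS_le c_p (by nlinarith)]
  · nlinarith [hS_le 1 (by nlinarith)]

end ShearBeam

theorem lyapunov_equivalent_to_energy_general
    {L ρ α lm μ ρ₁ K γ b ρ₃ δ κ β c_p : ℝ}
    (hL : 0 < L) (hρ : 0 < ρ) (hα : 0 < α) (hlm : 0 < lm)
    (hρ₁ : 0 < ρ₁) (hK : 0 < K) (hb : 0 < b) (hρ₃ : 0 < ρ₃)
    (hδ : 0 < δ) (hcp : 0 < c_p)
    (hpoin : ∀ f : ℝ → ℝ, ContDiff ℝ 1 f → f 0 = 0 → f L = 0 →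
      (∫ x in (0:ℝ)..L, (f x)^2) ≤ c_p * ∫ x in (0:ℝ)..L, (deriv f x)^2) :
    ∃ ξ : ℝ, 0 < ξ ∧
      ∀ u φ ψ w : ℝ → ℝ → ℝ,
        IsShearSolution L ρ α lm μ ρ₁ K γ b ρ₃ δ κ β u φ ψ w →
        ∀ t : ℝ, 0 ≤ t →
          |I1 L ρ μ ρ₁ γ u φ t + I2 L ρ₃ κ β φ w t|
              ≤ ξ * energy L ρ α lm ρ₁ K b ρ₃ δ u φ ψ w t ∧
          ∀ N : ℝ, ξ < N →
            (N - ξ) * energy L ρ α lm ρ₁ K b ρ₃ δ u φ ψ w t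
                ≤ N * energy L ρ α lm ρ₁ K b ρ₃ δ u φ ψ w t
                    + I1 L ρ μ ρ₁ γ u φ t + I2 L ρ₃ κ β φ w t ∧
              N * energy L ρ α lm ρ₁ K b ρ₃ δ u φ ψ w t
                    + I1 L ρ μ ρ₁ γ u φ t + I2 L ρ₃ κ β φ w t
                ≤ (N + ξ) * energy L ρ α lm ρ₁ K b ρ₃ δ u φ ψ w t := by
  set C := |ρ| + |μ / 2| + |ρ₁| + |γ / 2| + |ρ₃| + |κ / 2| + |β|
  set s := ρ⁻¹ + α⁻¹ + ρ₁⁻¹ + K⁻¹ + b⁻¹ + ρ₃⁻¹ + δ⁻¹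
  refine ⟨C * (2 * (1 + c_p) ^ 2) * (2 * s), by positivity, fun u φ ψ w hs t ht => ?_⟩
  have h13 : (1 : WithTop ℕ∞) ≤ 3 := by norm_num
  have hu := hs.smooth_u.of_le h13
  have hφ := hs.smooth_phi.of_le h13
  have hψ := hs.smooth_psi.of_le h13
  have hw := hs.smooth_w.of_le h13
  obtain ⟨hu₀, huL, hφ₀, hφL, hψ₀, hψL, hw₀, hwL⟩ := hs.bc t ht
  have hbound : |I1 L ρ μ ρ₁ γ u φ t + I2 L ρ₃ κ β φ w t|
      ≤ C * (2 * (1 + c_p) ^ 2) * (2 * s) * energy L ρ α lm ρ₁ K b ρ₃ δ u φ ψ w t :=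
    calc _ ≤ C * (2 * (1 + c_p) ^ 2 * energyNormSq L u φ ψ w t) :=
          abs_I1_add_I2_le_energyNormSq hL.le hcp.le hu hφ hψ hw t
            (hpoin _ (hu.contDiff_slice t) hu₀ huL) (hpoin _ (hφ.contDiff_slice t) hφ₀ hφL)
            (hpoin _ (hψ.contDiff_slice t) hψ₀ hψL) (hpoin _ (hw.contDiff_slice t) hw₀ hwL)
      _ ≤ C * (2 * (1 + c_p) ^ 2 * (2 * s * energy L ρ α lm ρ₁ K b ρ₃ δ u φ ψ w t)) := by
          gcongr
          exact energyNormSq_le_energy hL.le hρ hα hlm.le hρ₁ hK hb hρ₃ hδ hu hφ hψ hw t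
      _ = _ := by ring
  obtain ⟨hlow, hup⟩ := abs_le.1 hbound
  exact ⟨hbound, fun N _ => ⟨by linarith, by linarith⟩⟩

/-- equivalence of the Lyapunov functional with the energy. -/
theorem lyapunov_equivalent_to_energy
    {L ρ α lm μ ρ₁ K γ b ρ₃ δ κ β c_p : ℝ}
    (hL : 0 < L) (hρ : 0 < ρ) (hα : 0 < α) (hlm : 0 < lm) (hμ : 0 < μ)
    (hρ₁ : 0 < ρ₁) (hK : 0 < K) (hγ : 0 < γ) (hb : 0 < b) (hρ₃ : 0 < ρ₃)
    (hδ : 0 < δ) (hκ : 0 < κ) (hβ : β ≠ 0) (hcp : 0 < c_p)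
    (hpoin : ∀ f : ℝ → ℝ, ContDiff ℝ 1 f → f 0 = 0 → f L = 0 →
      (∫ x in (0:ℝ)..L, (f x)^2) ≤ c_p * ∫ x in (0:ℝ)..L, (deriv f x)^2) :
    ∃ ξ : ℝ, 0 < ξ ∧
      ∀ u φ ψ w : ℝ → ℝ → ℝ,
        IsShearSolution L ρ α lm μ ρ₁ K γ b ρ₃ δ κ β u φ ψ w →
        ∀ t : ℝ, 0 ≤ t →
          |I1 L ρ μ ρ₁ γ u φ t + I2 L ρ₃ κ β φ w t|
              ≤ ξ * energy L ρ α lm ρ₁ K b ρ₃ δ u φ ψ w t ∧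
          ∀ N : ℝ, ξ < N →
            (N - ξ) * energy L ρ α lm ρ₁ K b ρ₃ δ u φ ψ w t
                ≤ N * energy L ρ α lm ρ₁ K b ρ₃ δ u φ ψ w t
                    + I1 L ρ μ ρ₁ γ u φ t + I2 L ρ₃ κ β φ w t ∧
              N * energy L ρ α lm ρ₁ K b ρ₃ δ u φ ψ w t
                    + I1 L ρ μ ρ₁ γ u φ t + I2 L ρ₃ κ β φ w t
                ≤ (N + ξ) * energy L ρ α lm ρ₁ K b ρ₃ δ u φ ψ w t :=
  lyapunov_equivalent_to_energy_general hL hρ hα hlm hρ₁ hK hb hρ₃ hδ hcp hpoin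
end
end
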